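/- Let B_n be the solution of the Apéry recurrence n^3 u_n - (34 n^3 - 51 n^2 + 27 n - 5) u_{n-1} + (n-1)^3 u_{n-2} = 0 with B_0 = 0, B_1 = 6, and let A_n be the solution with A_0 = 1, A_1 = 5. Then lim_{n \to \infty} B_n / A_n = \zeta(3). -/

import Mathlib

open Filter Finset

namespace AperyAux

noncomputable def lam (n k : ℕ) : ℝ := (n.choose k : ℝ)^2 * ((n+k).choose k : ℝ)^2
noncomputable def H3 (n : ℕ) : ℝ := ∑ m ∈ range n, 1/((m:ℝ)+1)^3
noncomputable def ee (n m : ℕ) : ℝ :=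
  (-1)^(m+1) / (2*(m:ℝ)^3 * (n.choose m : ℝ) * ((n+m).choose m : ℝ))
noncomputable def cc (n k : ℕ) : ℝ := H3 n + ∑ j ∈ range k, ee n (j+1)
noncomputable def aa (n : ℕ) : ℝ := ∑ k ∈ range (n+1), lam n k
noncomputable def bb (n : ℕ) : ℝ := ∑ k ∈ range (n+1), lam n k * cc n k
noncomputable def Pp (n : ℕ) : ℝ := 34*(n:ℝ)^3+51*(n:ℝ)^2+27*(n:ℝ)+5
noncomputable def G (n k : ℕ) : ℝ :=
  4*(2*(n:ℝ)+1)*((k:ℝ)*(2*(k:ℝ)+1) - (2*(n:ℝ)+1)^2) * lam n k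
noncomputable def Dd (n k : ℕ) : ℝ :=
  5*(2*(n:ℝ)+1)*(-1)^(k+1)*(k:ℝ)/((n:ℝ)*((n:ℝ)+1)) * (n.choose k : ℝ) * ((n+k).choose k : ℝ)

lemma chooseR1 (n k : ℕ) (h : k ≤ n + 1) :
    (((n+1).choose k : ℝ)) * ((n:ℝ)+1-(k:ℝ)) = ((n:ℝ)+1) * (n.choose k : ℝ) := by
  have := Nat.choose_mul_succ_eq n k
  have hc : ((n + 1 - k : ℕ) : ℝ) = (n:ℝ)+1-(k:ℝ) := by
    rw [Nat.cast_sub h]; push_cast; ring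
  calc (((n+1).choose k : ℝ)) * ((n:ℝ)+1-(k:ℝ))
      = (((n+1).choose k) * ((n+1-k : ℕ)) : ℕ) := by rw [Nat.cast_mul, hc]
    _ = ((n.choose k * (n+1) : ℕ) : ℝ) := by rw [← this]
    _ = ((n:ℝ)+1) * (n.choose k : ℝ) := by push_cast; ring

lemma chooseR2 (n k : ℕ) :
    ((n:ℝ)+1) * ((n+1+k).choose k : ℝ) = ((n:ℝ)+1+(k:ℝ)) * ((n+k).choose k : ℝ) := by
  have h := chooseR1 (n+k) k (by omega)
  have e1 : n + k + 1 = n + 1 + k := by omega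
  rw [e1] at h; push_cast at h ⊢; linarith

lemma chooseR3 (n k : ℕ) (h : k ≤ n) :
    ((n.choose (k+1)):ℝ) * ((k:ℝ)+1) = (n.choose k : ℝ) * ((n:ℝ)-(k:ℝ)) := by
  have := Nat.choose_succ_right_eq n k
  have hc : ((n - k : ℕ) : ℝ) = (n:ℝ)-(k:ℝ) := by rw [Nat.cast_sub h]
  calc ((n.choose (k+1)):ℝ) * ((k:ℝ)+1)
      = ((n.choose (k+1) * (k+1) : ℕ) : ℝ) := by push_cast; ring
    _ = ((n.choose k * (n - k) : ℕ) : ℝ) := by rw [this]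
    _ = (n.choose k : ℝ) * ((n:ℝ)-(k:ℝ)) := by rw [Nat.cast_mul, hc]

lemma chooseR4 (n k : ℕ) :
    ((n:ℝ)+(k:ℝ)+1) * ((n+k).choose k : ℝ) = ((n+k+1).choose (k+1) : ℝ) * ((k:ℝ)+1) := by
  have := Nat.add_one_mul_choose_eq (n+k) k
  have : ((Nat.succ (n+k) * Nat.choose (n+k) k : ℕ) : ℝ)
      = (((n+k+1).choose (k+1) * (k+1) : ℕ) : ℝ) := by rw [Nat.succ_eq_add_one, this]
  push_cast at this; push_cast; linarith


lemma keyA (p j : ℕ) (hj : j ≤ p) :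
    ((p:ℝ)+2)^3 * lam (p+2) (j+1) - Pp (p+1) * lam (p+1) (j+1)
      + ((p:ℝ)+1)^3 * lam p (j+1) = G (p+1) (j+1) - G (p+1) j := by
  have hd1 : ((p:ℝ)+1-(j:ℝ)) ≠ 0 := by
    have : (j:ℝ) ≤ (p:ℝ) := by exact_mod_cast hj
    nlinarith
  have hd2 : ((p:ℝ)+2) ≠ 0 := by positivity
  have hd3 : ((p:ℝ)+1) ≠ 0 := by positivity
  have hd4 : ((p:ℝ)+(j:ℝ)+2) ≠ 0 := by positivity
  set x : ℝ := ((p+1).choose (j+1) : ℝ) with hxdef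
  set y : ℝ := ((p+j+2).choose (j+1) : ℝ) with hydef
  have hc1 : ((p+2).choose (j+1) : ℝ) = ((p:ℝ)+2)*x/((p:ℝ)+1-(j:ℝ)) := by
    rw [eq_div_iff hd1]
    have h := chooseR1 (p+1) (j+1) (by omega)
    push_cast at h; linear_combination h
  have hc2 : ((p+j+3).choose (j+1) : ℝ) = ((p:ℝ)+(j:ℝ)+3)*y/((p:ℝ)+2) := by
    rw [eq_div_iff hd2]
    have h := chooseR2 (p+1) (j+1)
    have e1 : p+1+1+(j+1) = p+j+3 := by omega
    have e2 : p+1+(j+1) = p+j+2 := by omega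
    rw [e1, e2] at h; push_cast at h; linear_combination h
  have hc3 : (p.choose (j+1) : ℝ) = x*((p:ℝ)-(j:ℝ))/((p:ℝ)+1) := by
    rw [eq_div_iff hd3]
    have h := chooseR1 p (j+1) (by omega)
    push_cast at h; linear_combination -h
  have hc4 : ((p+j+1).choose (j+1) : ℝ) = ((p:ℝ)+1)*y/((p:ℝ)+(j:ℝ)+2) := by
    rw [eq_div_iff hd4]
    have h := chooseR2 p (j+1)
    have e1 : p+1+(j+1) = p+j+2 := by omega
    have e2 : p+(j+1) = p+j+1 := by omega
    rw [e1, e2] at h; push_cast at h; linear_combination -h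
  have hc5 : ((p+1).choose j : ℝ) = x*((j:ℝ)+1)/((p:ℝ)+1-(j:ℝ)) := by
    rw [eq_div_iff hd1]
    have h := chooseR3 (p+1) j (by omega)
    push_cast at h; linear_combination -h
  have hc6 : ((p+1+j).choose j : ℝ) = y*((j:ℝ)+1)/((p:ℝ)+(j:ℝ)+2) := by
    rw [eq_div_iff hd4]
    have h := chooseR4 (p+1) j
    have e1 : p+1+j+1 = p+j+2 := by omega
    rw [e1] at h; push_cast at h; linear_combination h
  have e1 : p+2+(j+1) = p+j+3 := by omega
  have e2 : p+1+(j+1) = p+j+2 := by omega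
  have e3 : p+(j+1) = p+j+1 := by omega
  simp only [lam, G, Pp, e1, e2, e3]
  rw [hc1, hc2, hc3, hc4, hc5, hc6]
  push_cast
  field_simp
  ring

lemma lam_zero_of_lt {n k : ℕ} (h : n < k) : lam n k = 0 := by
  simp [lam, Nat.choose_eq_zero_of_lt h]

lemma keyA0 (p : ℕ) :
    ((p:ℝ)+2)^3 * lam (p+2) 0 - Pp (p+1) * lam (p+1) 0 + ((p:ℝ)+1)^3 * lam p 0
      = G (p+1) 0 := by
  simp only [lam, Nat.choose_zero_right, Pp, G, Nat.add_zero]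
  push_cast; ring

lemma keyAtop (p : ℕ) :
    ((p:ℝ)+2)^3 * lam (p+2) (p+2) - Pp (p+1) * lam (p+1) (p+2)
      + ((p:ℝ)+1)^3 * lam p (p+2) = G (p+1) (p+2) - G (p+1) (p+1) := by
  have hz1 : lam (p+1) (p+2) = 0 := lam_zero_of_lt (by omega)
  have hz2 : lam p (p+2) = 0 := lam_zero_of_lt (by omega)
  have hG2 : G (p+1) (p+2) = 0 := by simp [G, hz1]
  rw [hz1, hz2, hG2]
  set z : ℝ := ((2*p+2).choose (p+1) : ℝ) with hzdef
  set w : ℝ := ((2*p+3).choose (p+1) : ℝ) with hwdef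
  have hd : ((p:ℝ)+2) ≠ 0 := by positivity
  have hw : w = (2*(p:ℝ)+3)*z/((p:ℝ)+2) := by
    rw [eq_div_iff hd]
    have h := chooseR1 (2*p+2) (p+1) (by omega)
    have e1 : 2*p+2+1 = 2*p+3 := by omega
    rw [e1] at h; push_cast at h; linear_combination h
  have hv : ((2*p+4).choose (p+2) : ℝ) = (2*(p:ℝ)+4)*w/((p:ℝ)+2) := by
    rw [eq_div_iff hd]
    have h := chooseR4 (p+2) (p+1)
    have e1 : p+2+(p+1) = 2*p+3 := by omega
    have e2 : 2*p+3+1 = 2*p+4 := by omega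
    have e3 : p+1+1 = p+2 := by omega
    rw [e1, e2, e3] at h; push_cast at h; linear_combination -h
  have e4 : p+2+(p+2) = 2*p+4 := by omega
  have e5 : p+1+(p+1) = 2*p+2 := by omega
  simp only [lam, G, e4, e5, Nat.choose_self]
  rw [hv, hw]
  push_cast
  field_simp
  ring

lemma arecur (p : ℕ) :
    ((p:ℝ)+2)^3 * aa (p+2) - Pp (p+1) * aa (p+1) + ((p:ℝ)+1)^3 * aa p = 0 := by
  have hz1 : lam (p+1) (p+2) = 0 := lam_zero_of_lt (by omega)
  have hz2 : lam p (p+1) = 0 := lam_zero_of_lt (by omega)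
  have hz3 : lam p (p+2) = 0 := lam_zero_of_lt (by omega)
  set F : ℕ → ℝ := fun k => if k = 0 then 0 else G (p+1) (k-1) with hF
  have hsum : ∑ k ∈ range (p+3),
      (((p:ℝ)+2)^3 * lam (p+2) k - Pp (p+1) * lam (p+1) k + ((p:ℝ)+1)^3 * lam p k)
      = ((p:ℝ)+2)^3 * aa (p+2) - Pp (p+1) * aa (p+1) + ((p:ℝ)+1)^3 * aa p := by
    rw [Finset.sum_add_distrib, Finset.sum_sub_distrib, ← Finset.mul_sum, ← Finset.mul_sum,
      ← Finset.mul_sum]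
    have ha1 : ∑ k ∈ range (p+3), lam (p+1) k = aa (p+1) := by
      rw [Finset.sum_range_succ, hz1, add_zero]; rfl
    have ha0 : ∑ k ∈ range (p+3), lam p k = aa p := by
      rw [Finset.sum_range_succ, Finset.sum_range_succ, hz2, hz3, add_zero, add_zero]; rfl
    rw [ha1, ha0]; rfl
  rw [← hsum]
  have hstep : ∀ k ∈ range (p+3),
      ((p:ℝ)+2)^3 * lam (p+2) k - Pp (p+1) * lam (p+1) k + ((p:ℝ)+1)^3 * lam p k
        = F (k+1) - F k := by
    intro k hk
    match k with
    | 0 => simpa [hF] using keyA0 p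
    | (j+1) =>
      have hFv : F (j+2) - F (j+1) = G (p+1) (j+1) - G (p+1) j := by simp [hF]
      rw [hFv]
      rcases Nat.lt_or_ge j (p+1) with hj | hj
      · exact keyA p j (by omega)
      · have hj' : j = p+1 := by
          simp only [Finset.mem_range] at hk; omega
        subst hj'; exact keyAtop p
  rw [Finset.sum_congr rfl hstep, Finset.sum_range_sub F (p+3)]
  simp [hF, G, hz1]

lemma cc_succ (n k : ℕ) : cc n (k+1) = cc n k + ee n (k+1) := by
  rw [cc, cc, Finset.sum_range_succ]; ring

lemma H3_succ (n : ℕ) : H3 (n+1) = H3 n + 1/((n:ℝ)+1)^3 := by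
  rw [H3, H3, Finset.sum_range_succ]

lemma cc_zero (n : ℕ) : cc n 0 = H3 n := by simp [cc]

lemma cdiff (n k : ℕ) (hk : k ≤ n) :
    cc (n+1) k = cc n k
      + (-1)^k / (((n:ℝ)+1)^3 * (n.choose k : ℝ) * ((n+1+k).choose k : ℝ)) := by
  induction k with
  | zero => simp [cc_zero, H3_succ]
  | succ k ih =>
    have hk' : k ≤ n := by omega
    rw [cc_succ, cc_succ, ih hk']
    have hxpos : 0 < ((n.choose (k+1) : ℝ)) := by
      exact_mod_cast Nat.choose_pos (by omega : k+1 ≤ n)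
    have hypos : 0 < (((n+k+1).choose (k+1) : ℝ)) := by
      exact_mod_cast Nat.choose_pos (by omega : k+1 ≤ n+k+1)
    set x : ℝ := (n.choose (k+1) : ℝ)
    set y : ℝ := ((n+k+1).choose (k+1) : ℝ)
    have hnk : ((n:ℝ)-(k:ℝ)) ≠ 0 := by
      have : (k:ℝ) + 1 ≤ (n:ℝ) := by exact_mod_cast hk
      nlinarith
    have hn1 : ((n:ℝ)+1) ≠ 0 := by positivity
    have hA : (n.choose k : ℝ) = x*((k:ℝ)+1)/((n:ℝ)-(k:ℝ)) := by
      rw [eq_div_iff hnk]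
      have h := chooseR3 n k hk'
      linear_combination -h
    have hB : ((n+1+k).choose k : ℝ) = y*((k:ℝ)+1)/((n:ℝ)+1) := by
      rw [eq_div_iff hn1]
      have h := chooseR3 (n+k+1) k (by omega)
      have e1 : n+1+k = n+k+1 := by omega
      rw [e1]; push_cast at h; linear_combination -h
    have hC : ((n+1).choose (k+1) : ℝ) = ((n:ℝ)+1)*x/((n:ℝ)-(k:ℝ)) := by
      rw [eq_div_iff hnk]
      have h := chooseR1 n (k+1) (by omega)
      push_cast at h; linear_combination h
    have hD : ((n+1+(k+1)).choose (k+1) : ℝ) = ((n:ℝ)+(k:ℝ)+2)*y/((n:ℝ)+1) := by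
      rw [eq_div_iff hn1]
      have h := chooseR2 n (k+1)
      have e1 : n+1+(k+1) = n+k+2 := by omega
      have e2 : n+(k+1) = n+k+1 := by omega
      rw [e1] at h ⊢; rw [e2] at h; push_cast at h; linear_combination h
  -- identity: cc n k + fk + ee (n+1) (k+1) = cc n k + ee n (k+1) + f(k+1)
    have e3 : n+(k+1) = n+k+1 := by omega
    simp only [ee, e3]
    rw [hA, hB, hC, hD]
    push_cast
    have hx : x ≠ 0 := ne_of_gt hxpos
    have hy : y ≠ 0 := ne_of_gt hypos
    have hk1 : ((k:ℝ)+1) ≠ 0 := by positivity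
    simp only [pow_succ]
    simp only [show ((n.choose (k+1) : ℕ) : ℝ) = x from rfl,
      show (((n+k+1).choose (k+1) : ℕ) : ℝ) = y from rfl]
    field_simp
    ring

set_option maxHeartbeats 2000000 in
lemma keyB0 (p : ℕ) :
    ((p:ℝ)+2)^3 * lam (p+2) 0 * cc (p+2) 0 - Pp (p+1) * lam (p+1) 0 * cc (p+1) 0
      + ((p:ℝ)+1)^3 * lam p 0 * cc p 0 = G (p+1) 0 * cc (p+1) 0 + Dd (p+1) 0 := by
  have h2 : cc (p+2) 0 = cc (p+1) 0 + 1/((p:ℝ)+2)^3 := by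
    rw [cc_zero, cc_zero, H3_succ]; push_cast; ring
  have h0 : cc p 0 = cc (p+1) 0 - 1/((p:ℝ)+1)^3 := by
    rw [cc_zero, cc_zero, H3_succ]; push_cast; ring
  have hD : Dd (p+1) 0 = 0 := by simp [Dd]
  have hl : ∀ m : ℕ, lam m 0 = 1 := by intro m; simp [lam]
  rw [h2, h0, hD, hl, hl, hl]
  simp only [G, Pp, hl]
  push_cast
  field_simp
  ring

set_option maxHeartbeats 2000000 in
lemma keyBtop (p : ℕ) :
    ((p:ℝ)+2)^3 * lam (p+2) (p+2) * cc (p+2) (p+2)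
      = - (G (p+1) (p+1) * cc (p+1) (p+1) + Dd (p+1) (p+1)) := by
  have e4 : p+2+(p+2) = 2*p+4 := by omega
  have e5 : p+1+(p+1) = 2*p+2 := by omega
  have e6 : p+1+1+(p+1) = 2*p+3 := by omega
  have hzpos : (0:ℝ) < ((2*p+2).choose (p+1) : ℝ) := by
    exact_mod_cast Nat.choose_pos (by omega : p+1 ≤ 2*p+2)
  have hz : ((2*p+2).choose (p+1) : ℝ) ≠ 0 := ne_of_gt hzpos
  have hd : ((p:ℝ)+2) ≠ 0 := by positivity
  have hw : ((2*p+3).choose (p+1) : ℝ)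
      = (2*(p:ℝ)+3)*((2*p+2).choose (p+1) : ℝ)/((p:ℝ)+2) := by
    rw [eq_div_iff hd]
    have h := chooseR1 (2*p+2) (p+1) (by omega)
    have e1 : 2*p+2+1 = 2*p+3 := by omega
    rw [e1] at h; push_cast at h; linear_combination h
  have hv : ((2*p+4).choose (p+2) : ℝ)
      = (2*(p:ℝ)+4)*((2*p+3).choose (p+1) : ℝ)/((p:ℝ)+2) := by
    rw [eq_div_iff hd]
    have h := chooseR4 (p+2) (p+1)
    have e1 : p+2+(p+1) = 2*p+3 := by omega
    have e2 : 2*p+3+1 = 2*p+4 := by omega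
    have e3 : p+1+1 = p+2 := by omega
    rw [e1, e2, e3] at h; push_cast at h; linear_combination -h
  have h1 : cc (p+2) (p+2) = cc (p+2) (p+1) + ee (p+2) (p+2) := cc_succ _ _
  have h2 : cc (p+2) (p+1) = cc (p+1) (p+1)
      + (-1)^(p+1) / (((p:ℝ)+2)^3 * ((2*p+3).choose (p+1) : ℝ)) := by
    have h := cdiff (p+1) (p+1) le_rfl
    rw [e6] at h; rw [Nat.choose_self] at h; push_cast at h; linear_combination h
  rw [h1, h2]
  simp only [lam, G, Dd, ee, e4, e5, Nat.choose_self]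
  rw [hv, hw]
  push_cast
  simp only [pow_succ]
  field_simp
  ring


set_option maxHeartbeats 4000000 in
lemma keyB (p j : ℕ) (hj : j ≤ p) :
    ((p:ℝ)+2)^3 * lam (p+2) (j+1) * cc (p+2) (j+1)
      - Pp (p+1) * lam (p+1) (j+1) * cc (p+1) (j+1)
      + ((p:ℝ)+1)^3 * lam p (j+1) * cc p (j+1)
    = (G (p+1) (j+1) * cc (p+1) (j+1) + Dd (p+1) (j+1))
      - (G (p+1) j * cc (p+1) j + Dd (p+1) j) := by
  have hd1 : ((p:ℝ)+1-(j:ℝ)) ≠ 0 := by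
    have : (j:ℝ) ≤ (p:ℝ) := by exact_mod_cast hj
    nlinarith
  have hd2 : ((p:ℝ)+2) ≠ 0 := by positivity
  have hd3 : ((p:ℝ)+1) ≠ 0 := by positivity
  have hd4 : ((p:ℝ)+(j:ℝ)+2) ≠ 0 := by positivity
  have hj1 : ((j:ℝ)+1) ≠ 0 := by positivity
  have hd5 : ((p:ℝ)+(j:ℝ)+3) ≠ 0 := by positivity
  have hxpos : (0:ℝ) < (((p+1).choose (j+1) : ℝ)) := by
    exact_mod_cast Nat.choose_pos (by omega : j+1 ≤ p+1)
  have hypos : (0:ℝ) < (((p+j+2).choose (j+1) : ℝ)) := by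
    exact_mod_cast Nat.choose_pos (by omega : j+1 ≤ p+j+2)
  have hx : (((p+1).choose (j+1) : ℝ)) ≠ 0 := ne_of_gt hxpos
  have hy : (((p+j+2).choose (j+1) : ℝ)) ≠ 0 := ne_of_gt hypos
  have e1 : p+2+(j+1) = p+j+3 := by omega
  have e2 : p+1+(j+1) = p+j+2 := by omega
  have e3 : p+(j+1) = p+j+1 := by omega
  have e0 : p+1+1+(j+1) = p+j+3 := by omega
  have hc1 : ((p+2).choose (j+1) : ℝ)
      = ((p:ℝ)+2)*((p+1).choose (j+1) : ℝ)/((p:ℝ)+1-(j:ℝ)) := by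
    rw [eq_div_iff hd1]
    have h := chooseR1 (p+1) (j+1) (by omega)
    push_cast at h; linear_combination h
  have hc2 : ((p+j+3).choose (j+1) : ℝ)
      = ((p:ℝ)+(j:ℝ)+3)*((p+j+2).choose (j+1) : ℝ)/((p:ℝ)+2) := by
    rw [eq_div_iff hd2]
    have h := chooseR2 (p+1) (j+1)
    rw [e0, e2] at h; push_cast at h; linear_combination h
  have hc5 : ((p+1).choose j : ℝ)
      = ((p+1).choose (j+1) : ℝ)*((j:ℝ)+1)/((p:ℝ)+1-(j:ℝ)) := by
    rw [eq_div_iff hd1]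
    have h := chooseR3 (p+1) j (by omega)
    push_cast at h; linear_combination -h
  have hc6 : ((p+1+j).choose j : ℝ)
      = ((p+j+2).choose (j+1) : ℝ)*((j:ℝ)+1)/((p:ℝ)+(j:ℝ)+2) := by
    rw [eq_div_iff hd4]
    have h := chooseR4 (p+1) j
    have e7 : p+1+j+1 = p+j+2 := by omega
    rw [e7] at h; push_cast at h; linear_combination h
  have h2 : cc (p+2) (j+1) = cc (p+1) (j+1)
      + (-1)^(j+1) / (((p:ℝ)+2)^3 * ((p+1).choose (j+1) : ℝ) * ((p+j+3).choose (j+1) : ℝ)) := by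
    have h := cdiff (p+1) (j+1) (by omega)
    rw [e0] at h; push_cast at h; linear_combination h
  have hcc : cc (p+1) j = cc (p+1) (j+1) - ee (p+1) (j+1) := by
    rw [cc_succ]; ring
  have heev : ee (p+1) (j+1)
      = ((-1)^(j+1)*(-1)) / (2*((j:ℝ)+1)^3 * ((p+1).choose (j+1) : ℝ)
          * ((p+j+2).choose (j+1) : ℝ)) := by
    rw [ee, e2]; push_cast; rw [pow_succ, pow_succ]
  have h2' : cc (p+2) (j+1) = cc (p+1) (j+1)
      + (-1)^(j+1) / (((p:ℝ)+2)^2 * ((p:ℝ)+(j:ℝ)+3) * ((p+1).choose (j+1) : ℝ)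
          * ((p+j+2).choose (j+1) : ℝ)) := by
    rw [h2, hc2]
    congr 1
    rw [div_eq_div_iff (by positivity) (by positivity)]
    field_simp
  rcases Nat.lt_or_ge j p with hjp | hjp
  · have hd6 : ((p:ℝ)-(j:ℝ)) ≠ 0 := by
      have : (j:ℝ) < (p:ℝ) := by exact_mod_cast hjp
      nlinarith
    have hc3 : (p.choose (j+1) : ℝ)
        = ((p+1).choose (j+1) : ℝ)*((p:ℝ)-(j:ℝ))/((p:ℝ)+1) := by
      rw [eq_div_iff hd3]
      have h := chooseR1 p (j+1) (by omega)
      push_cast at h; linear_combination -h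
    have hc4 : ((p+j+1).choose (j+1) : ℝ)
        = ((p:ℝ)+1)*((p+j+2).choose (j+1) : ℝ)/((p:ℝ)+(j:ℝ)+2) := by
      rw [eq_div_iff hd4]
      have h := chooseR2 p (j+1)
      rw [e2, e3] at h; push_cast at h; linear_combination -h
    have h0 : cc p (j+1) = cc (p+1) (j+1)
        - (-1)^(j+1) / (((p:ℝ)+1)^3 * (p.choose (j+1) : ℝ) * ((p+j+2).choose (j+1) : ℝ)) := by
      have h := cdiff p (j+1) (by omega)
      rw [e2] at h; push_cast at h; linear_combination -h
    have hpj : (p.choose (j+1) : ℝ) ≠ 0 := by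
      have : (0:ℝ) < (p.choose (j+1) : ℝ) := by
        exact_mod_cast Nat.choose_pos (by omega : j+1 ≤ p)
      exact ne_of_gt this
    have h0' : cc p (j+1) = cc (p+1) (j+1)
        - (-1)^(j+1) / (((p:ℝ)+1)^2 * ((p:ℝ)-(j:ℝ)) * ((p+1).choose (j+1) : ℝ)
            * ((p+j+2).choose (j+1) : ℝ)) := by
      rw [h0, hc3]
      congr 1
      rw [div_eq_div_iff (by positivity) ?_]
      · field_simp
      · have hxp : (0:ℝ) < ((p+1).choose (j+1) : ℝ) := hxpos
        have hyp : (0:ℝ) < ((p+j+2).choose (j+1) : ℝ) := hypos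
        have hpj' : (0:ℝ) < (p:ℝ)-(j:ℝ) := by
          have : (j:ℝ) < (p:ℝ) := by exact_mod_cast hjp
          linarith
        positivity
    rw [h2', h0', hcc, heev]
    simp only [lam, G, Dd, Pp, e1, e2, e3]
    rw [hc1, hc2, hc3, hc4, hc5, hc6]
    push_cast
    simp only [pow_succ]
    field_simp
    ring
  · have hjp' : j = p := by omega
    subst hjp'
    have hz : lam j (j+1) = 0 := lam_zero_of_lt (by omega)
    rw [hz, h2', hcc, heev]
    simp only [lam, G, Dd, Pp, e1, e2, mul_zero, zero_mul, add_zero]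
    rw [hc1, hc2, hc5, hc6]
    push_cast
    simp only [pow_succ]
    field_simp
    ring


end AperyAux

namespace AperyAux
lemma Dd_top (p : ℕ) : Dd (p+1) (p+2) = 0 := by
  simp [Dd, Nat.choose_eq_zero_of_lt (by omega : p+1 < p+2)]

lemma brecur (p : ℕ) :
    ((p:ℝ)+2)^3 * bb (p+2) - Pp (p+1) * bb (p+1) + ((p:ℝ)+1)^3 * bb p = 0 := by
  have hz1 : lam (p+1) (p+2) = 0 := lam_zero_of_lt (by omega)
  have hz2 : lam p (p+1) = 0 := lam_zero_of_lt (by omega)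
  have hz3 : lam p (p+2) = 0 := lam_zero_of_lt (by omega)
  set F : ℕ → ℝ := fun k =>
    if k = 0 then 0 else G (p+1) (k-1) * cc (p+1) (k-1) + Dd (p+1) (k-1) with hF
  have hsum : ∑ k ∈ range (p+3),
      (((p:ℝ)+2)^3 * (lam (p+2) k * cc (p+2) k) - Pp (p+1) * (lam (p+1) k * cc (p+1) k)
        + ((p:ℝ)+1)^3 * (lam p k * cc p k))
      = ((p:ℝ)+2)^3 * bb (p+2) - Pp (p+1) * bb (p+1) + ((p:ℝ)+1)^3 * bb p := by
    rw [Finset.sum_add_distrib, Finset.sum_sub_distrib, ← Finset.mul_sum, ← Finset.mul_sum,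
      ← Finset.mul_sum]
    have ha1 : ∑ k ∈ range (p+3), lam (p+1) k * cc (p+1) k = bb (p+1) := by
      rw [Finset.sum_range_succ, hz1, zero_mul, add_zero]; rfl
    have ha0 : ∑ k ∈ range (p+3), lam p k * cc p k = bb p := by
      rw [Finset.sum_range_succ, Finset.sum_range_succ, hz2, hz3, zero_mul, zero_mul,
        add_zero, add_zero]; rfl
    rw [ha1, ha0]; rfl
  rw [← hsum]
  have hstep : ∀ k ∈ range (p+3),
      ((p:ℝ)+2)^3 * (lam (p+2) k * cc (p+2) k) - Pp (p+1) * (lam (p+1) k * cc (p+1) k)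
        + ((p:ℝ)+1)^3 * (lam p k * cc p k) = F (k+1) - F k := by
    intro k hk
    match k with
    | 0 =>
      have : F 1 - F 0 = G (p+1) 0 * cc (p+1) 0 + Dd (p+1) 0 := by simp [hF]
      rw [this]
      have h := keyB0 p
      linear_combination h
    | (j+1) =>
      have hFv : F (j+2) - F (j+1)
          = (G (p+1) (j+1) * cc (p+1) (j+1) + Dd (p+1) (j+1))
            - (G (p+1) j * cc (p+1) j + Dd (p+1) j) := by simp [hF]
      rw [hFv]
      rcases Nat.lt_or_ge j (p+1) with hj | hj
      · have h := keyB p j (by omega)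
        linear_combination h
      · have hj' : j = p+1 := by
          simp only [Finset.mem_range] at hk; omega
        subst hj'
        have hG2 : G (p+1) (p+2) = 0 := by simp [G, hz1]
        rw [hz1, hG2, Dd_top]
        have hz4 : lam p (p+2) = 0 := hz3
        rw [hz4]
        have h := keyBtop p
        linear_combination h
  rw [Finset.sum_congr rfl hstep, Finset.sum_range_sub F (p+3)]
  have hG2 : G (p+1) (p+2) = 0 := by simp [G, hz1]
  simp [hF, hG2, Dd_top]

lemma aa0 : aa 0 = 1 := by simp [aa, lam]
lemma aa1 : aa 1 = 5 := by
  rw [aa]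
  rw [Finset.sum_range_succ, Finset.sum_range_succ, Finset.sum_range_zero]
  norm_num [lam]
lemma bb0 : bb 0 = 0 := by simp [bb, cc_zero, H3]
lemma bb1 : bb 1 = 6 := by
  rw [bb]
  rw [Finset.sum_range_succ, Finset.sum_range_succ, Finset.sum_range_zero]
  rw [cc_zero, cc_succ, cc_zero]
  norm_num [lam, H3, ee, Finset.sum_range_succ]

noncomputable def LL : ℝ := ∑' k : ℕ, 1 / ((k : ℝ) + 1) ^ 3

lemma hsummable : Summable (fun k : ℕ => 1 / ((k : ℝ) + 1) ^ 3) := by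
  have h : Summable (fun k : ℕ => 1 / ((k : ℝ)) ^ 3) :=
    Real.summable_one_div_nat_pow.mpr (by norm_num)
  have := (summable_nat_add_iff 1).mpr h
  simpa using this

lemma LL_nonneg : 0 ≤ LL := tsum_nonneg (fun k => by positivity)

lemma H3_le (n : ℕ) : H3 n ≤ LL :=
  Summable.sum_le_tsum (range n) (fun k _ => by positivity) hsummable

lemma H3_tendsto : Tendsto H3 atTop (nhds LL) := by
  have := hsummable.hasSum.tendsto_sum_nat
  exact this

lemma lam_nonneg (n k : ℕ) : 0 ≤ lam n k := by rw [lam]; positivity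

lemma lam_zero (n : ℕ) : lam n 0 = 1 := by simp [lam]

lemma one_le_aa (n : ℕ) : 1 ≤ aa n := by
  rw [aa]
  calc (1:ℝ) = lam n 0 := (lam_zero n).symm
    _ ≤ ∑ k ∈ range (n+1), lam n k :=
        Finset.single_le_sum (fun i _ => lam_nonneg n i) (by simp)

lemma aa_pos (n : ℕ) : 0 < aa n := lt_of_lt_of_le one_pos (one_le_aa n)

lemma choose_ge (n m : ℕ) (hm : 1 ≤ m) : n+1 ≤ (n+m).choose m := by
  induction m with
  | zero => omega
  | succ m ih =>
    rcases Nat.eq_or_lt_of_le hm with h | h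
    · have : m = 0 := by omega
      subst this; simp
    · have h1 : 1 ≤ m := by omega
      have := ih h1
      have e : n+(m+1) = (n+m)+1 := by omega
      rw [e, Nat.choose_succ_succ]
      omega

lemma ee_bound (n m : ℕ) (h1 : 1 ≤ m) (h2 : m ≤ n) :
    |ee n m| ≤ 1/(m:ℝ)^3 * (1/(2*((n:ℝ)+1))) := by
  have hCn : (1:ℝ) ≤ (n.choose m : ℝ) := by
    exact_mod_cast Nat.succ_le_of_lt (Nat.choose_pos h2)
  have hCm : ((n:ℝ)+1) ≤ ((n+m).choose m : ℝ) := by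
    exact_mod_cast choose_ge n m h1
  have hm3 : (0:ℝ) < (m:ℝ)^3 := by positivity
  have hd : (0:ℝ) < 2*(m:ℝ)^3 * (n.choose m : ℝ) * ((n+m).choose m : ℝ) := by
    have h01 : (0:ℝ) < (n.choose m : ℝ) := lt_of_lt_of_le one_pos hCn
    have h02 : (0:ℝ) < ((n+m).choose m : ℝ) := by linarith [Nat.cast_nonneg (α := ℝ) n]
    positivity
  rw [ee, abs_div, abs_pow, abs_neg, abs_one, one_pow, abs_of_pos hd]
  rw [one_div_mul_one_div]
  apply one_div_le_one_div_of_le (by positivity)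
  calc (m:ℝ)^3 * (2*((n:ℝ)+1)) = 2*(m:ℝ)^3 * 1 * ((n:ℝ)+1) := by ring
    _ ≤ 2*(m:ℝ)^3 * (n.choose m : ℝ) * ((n+m).choose m : ℝ) := by
        apply mul_le_mul _ hCm (by positivity) (by positivity)
        apply mul_le_mul_of_nonneg_left hCn (by positivity)

lemma cc_err (n k : ℕ) (hk : k ≤ n) : |cc n k - H3 n| ≤ LL/(2*((n:ℝ)+1)) := by
  have : cc n k - H3 n = ∑ j ∈ range k, ee n (j+1) := by rw [cc]; ring
  rw [this]
  calc |∑ j ∈ range k, ee n (j+1)| ≤ ∑ j ∈ range k, |ee n (j+1)| :=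
        Finset.abs_sum_le_sum_abs _ _
    _ ≤ ∑ j ∈ range k, 1/((j:ℝ)+1)^3 * (1/(2*((n:ℝ)+1))) := by
        apply Finset.sum_le_sum
        intro j hj
        have hj' : j + 1 ≤ n := by
          simp only [Finset.mem_range] at hj; omega
        have := ee_bound n (j+1) (by omega) hj'
        push_cast at this
        exact this
    _ = H3 k * (1/(2*((n:ℝ)+1))) := by rw [H3, Finset.sum_mul]
    _ ≤ LL * (1/(2*((n:ℝ)+1))) := by
        apply mul_le_mul_of_nonneg_right (H3_le k) (by positivity)
    _ = LL/(2*((n:ℝ)+1)) := by ring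

lemma bb_div_aa_err (n : ℕ) :
    |bb n / aa n - LL| ≤ |H3 n - LL| + LL/(2*((n:ℝ)+1)) := by
  have haa := aa_pos n
  have hq : bb n / aa n - LL = (bb n - LL * aa n) / aa n := by
    field_simp
  rw [hq, abs_div, abs_of_pos haa, div_le_iff₀ haa]
  have hbb : bb n - LL * aa n = ∑ k ∈ range (n+1), lam n k * (cc n k - LL) := by
    rw [bb, aa, Finset.mul_sum, ← Finset.sum_sub_distrib]
    congr 1; funext k; ring
  rw [hbb]
  set E : ℝ := |H3 n - LL| + LL/(2*((n:ℝ)+1)) with hE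
  calc |∑ k ∈ range (n+1), lam n k * (cc n k - LL)|
      ≤ ∑ k ∈ range (n+1), |lam n k * (cc n k - LL)| := Finset.abs_sum_le_sum_abs _ _
    _ ≤ ∑ k ∈ range (n+1), lam n k * E := by
        apply Finset.sum_le_sum
        intro k hk
        rw [abs_mul, abs_of_nonneg (lam_nonneg n k)]
        apply mul_le_mul_of_nonneg_left _ (lam_nonneg n k)
        have hk' : k ≤ n := by simp only [Finset.mem_range] at hk; omega
        calc |cc n k - LL| = |(cc n k - H3 n) + (H3 n - LL)| := by ring_nf
          _ ≤ |cc n k - H3 n| + |H3 n - LL| := abs_add_le _ _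
          _ ≤ LL/(2*((n:ℝ)+1)) + |H3 n - LL| := by
              have := cc_err n k hk'; linarith
          _ = E := by rw [hE]; ring
    _ = E * aa n := by rw [← Finset.sum_mul, aa, mul_comm]

lemma main_limit : Tendsto (fun n : ℕ => bb n / aa n) atTop (nhds LL) := by
  rw [← tendsto_sub_nhds_zero_iff]
  apply squeeze_zero_norm (a := fun n : ℕ => |H3 n - LL| + LL/(2*((n:ℝ)+1)))
    (fun n => by simpa using bb_div_aa_err n)
  · have h1 : Tendsto (fun n : ℕ => |H3 n - LL|) atTop (nhds 0) := by
      have := (tendsto_sub_nhds_zero_iff.mpr H3_tendsto).abs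
      simpa using this
    have h2 : Tendsto (fun n : ℕ => LL/(2*((n:ℝ)+1))) atTop (nhds 0) := by
      have := tendsto_one_div_add_atTop_nhds_zero_nat.const_mul (LL/2)
      simp only [mul_zero] at this
      apply this.congr
      intro n; push_cast; field_simp
    simpa using h1.add h2


end AperyAux

open AperyAux

/-- Apéry's theorem on `ζ(3)`: if `A` and `B` are the solutions of the Apéry recurrence
`n³ uₙ - (34n³ - 51n² + 27n - 5) uₙ₋₁ + (n-1)³ uₙ₋₂ = 0` with `A 0 = 1`, `A 1 = 5` and
`B 0 = 0`, `B 1 = 6`, then `Bₙ / Aₙ → ζ(3) = ∑_{k ≥ 1} k⁻³`. -/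
theorem apery_limit_zeta3 (A B : ℕ → ℝ)
    (hA0 : A 0 = 1) (hA1 : A 1 = 5) (hB0 : B 0 = 0) (hB1 : B 1 = 6)
    (hArec : ∀ n : ℕ, 2 ≤ n →
      (n : ℝ) ^ 3 * A n
        - (34 * (n : ℝ) ^ 3 - 51 * (n : ℝ) ^ 2 + 27 * (n : ℝ) - 5) * A (n - 1)
        + ((n : ℝ) - 1) ^ 3 * A (n - 2) = 0)
    (hBrec : ∀ n : ℕ, 2 ≤ n →
      (n : ℝ) ^ 3 * B n
        - (34 * (n : ℝ) ^ 3 - 51 * (n : ℝ) ^ 2 + 27 * (n : ℝ) - 5) * B (n - 1)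
        + ((n : ℝ) - 1) ^ 3 * B (n - 2) = 0) :
    Tendsto (fun n : ℕ => B n / A n) atTop
      (nhds (∑' k : ℕ, 1 / ((k : ℝ) + 1) ^ 3)) := by
  have key : ∀ n : ℕ, A n = aa n ∧ B n = bb n := by
    intro n
    induction n using Nat.strong_induction_on with
    | _ n ih =>
      match n with
      | 0 => exact ⟨by rw [hA0, aa0], by rw [hB0, bb0]⟩
      | 1 => exact ⟨by rw [hA1, aa1], by rw [hB1, bb1]⟩
      | (m+2) =>
        have ihA1 := (ih (m+1) (by omega)).1
        have ihA0 := (ih m (by omega)).1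
        have ihB1 := (ih (m+1) (by omega)).2
        have ihB0 := (ih m (by omega)).2
        have e1 : m+2-1 = m+1 := by omega
        have e2 : m+2-2 = m := by omega
        have hne : ((m:ℝ)+2)^3 ≠ 0 := by positivity
        constructor
        · have hr := hArec (m+2) (by omega)
          rw [e1, e2, ihA1, ihA0] at hr
          push_cast at hr
          have ha := arecur m
          simp only [Pp] at ha
          push_cast at ha
          apply mul_left_cancel₀ hne
          linear_combination hr - ha
        · have hr := hBrec (m+2) (by omega)
          rw [e1, e2, ihB1, ihB0] at hr
          push_cast at hr
          have ha := brecur m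
          simp only [Pp] at ha
          push_cast at ha
          apply mul_left_cancel₀ hne
          linear_combination hr - ha
  have : (fun n : ℕ => B n / A n) = fun n : ℕ => bb n / aa n := by
    funext n; rw [(key n).1, (key n).2]
  rw [this]
  exact main_limit
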